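/- arXiv:2509.09612 — 6 statements merged into one kernel-verified Lean document; each statement's English description precedes it below -/
import Mathlib

section
/- Let a, c, s, L be positive reals, β ≥ 0, and let P_in, G₀, K, g, ℓ be real with b = √(2a)/c. Define P̂₂(x) = (P_in − 2a·G₀·x)/s − (K·g·P_in/(2·b·c²·(s+β)))·cosh(b·√s·(L−ℓ+x))/(√s·sinh(b·√s·L)). Then P̂₂ satisfies P̂₂''(x) = (2a/c²)·(s·P̂₂(x) − (P_in − 2a·G₀·x)) for all x ∈ ℝ. -/
open Real

theorem laplace_pressure_upstream_satisfies_ode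
    (a c s L β P_in G₀ K g ℓ : ℝ)
    (ha : 0 < a) (hc : 0 < c) (hs : 0 < s) (hL : 0 < L) (hβ : 0 ≤ β)
    (b : ℝ) (hb : b = Real.sqrt (2 * a) / c)
    (P₂ : ℝ → ℝ)
    (hP₂ : ∀ x : ℝ, P₂ x = (P_in - 2 * a * G₀ * x) / s
        - (K * g * P_in / (2 * b * c ^ 2 * (s + β)))
          * Real.cosh (b * Real.sqrt s * (L - ℓ + x))
          / (Real.sqrt s * Real.sinh (b * Real.sqrt s * L))) :
    ∀ x : ℝ, deriv (deriv P₂) x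
      = (2 * a / c ^ 2) * (s * P₂ x - (P_in - 2 * a * G₀ * x)) := by
  set k : ℝ := b * Real.sqrt s with hk
  set C : ℝ := -(K * g * P_in / (2 * b * c ^ 2 * (s + β)))
      / (Real.sqrt s * Real.sinh (k * L)) with hC
  have hfun : P₂ = fun x => (P_in - 2 * a * G₀ * x) / s
      + C * Real.cosh (k * (L - ℓ + x)) := by
    funext x
    rw [hP₂ x, hC]
    ring
  have hinner : ∀ x : ℝ, HasDerivAt (fun x => k * (L - ℓ + x)) k x := by
    intro x
    have h := ((hasDerivAt_id x).const_add (L - ℓ)).const_mul k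
    simpa using h
  have hlin : ∀ x : ℝ, HasDerivAt (fun x => (P_in - 2 * a * G₀ * x) / s)
      (-(2 * a * G₀) / s) x := by
    intro x
    have h := (((hasDerivAt_id x).const_mul (2 * a * G₀)).const_sub P_in).div_const s
    simpa using h
  have hd1 : ∀ x : ℝ, HasDerivAt P₂
      (-(2 * a * G₀) / s + C * (Real.sinh (k * (L - ℓ + x)) * k)) x := by
    intro x
    rw [hfun]
    exact (hlin x).add
      (((Real.hasDerivAt_cosh _).comp x (hinner x)).const_mul C)
  have hderiv1 : deriv P₂ = fun x =>
      -(2 * a * G₀) / s + C * (Real.sinh (k * (L - ℓ + x)) * k) := by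
    funext x; exact (hd1 x).deriv
  have hd2 : ∀ x : ℝ, HasDerivAt (deriv P₂)
      (C * (Real.cosh (k * (L - ℓ + x)) * k * k)) x := by
    intro x
    rw [hderiv1]
    have h := ((((Real.hasDerivAt_sinh _).comp x (hinner x)).mul_const k).const_mul C).const_add
      (-(2 * a * G₀) / s)
    simpa [mul_assoc] using h
  intro x
  rw [(hd2 x).deriv, hP₂ x]
  have hb2 : k ^ 2 = 2 * a / c ^ 2 * s := by
    rw [hk, hb]
    rw [mul_pow, div_pow, Real.sq_sqrt (by positivity : (0:ℝ) ≤ 2 * a),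
      Real.sq_sqrt hs.le]
  have hsne : s ≠ 0 := hs.ne'
  have : C * (Real.cosh (k * (L - ℓ + x)) * k * k)
      = k ^ 2 * (C * Real.cosh (k * (L - ℓ + x))) := by ring
  rw [this, hb2]
  have hCc : (K * g * P_in / (2 * b * c ^ 2 * (s + β)))
      * Real.cosh (b * Real.sqrt s * (L - ℓ + x))
      / (Real.sqrt s * Real.sinh (b * Real.sqrt s * L))
      = -(C * Real.cosh (k * (L - ℓ + x))) := by
    rw [hC, hk]; ring
  rw [hCc]
  field_simp
  ring
end

section
/- Let a, c, L be positive reals, ℓ, β real, n a positive natural number, and set α = π²·c²/(2a·L²). Assume α·n² ≠ β. Define u(x,t) = cos(π·n·(L−ℓ+x)/L) · (exp(−β·t) − exp(−α·n²·t))/(α·n² − β). Then u satisfies the forced heat equation ∂u/∂t (x,t) = (c²/(2a))·∂²u/∂x² (x,t) + cos(π·n·(L−ℓ+x)/L)·exp(−β·t) for all x, t ∈ ℝ. -/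
open Real

theorem forced_mode_solves_forced_heat_equation
    (a c L ℓ β : ℝ) (ha : 0 < a) (hc : 0 < c) (hL : 0 < L)
    (n : ℕ) (hn : 0 < n)
    (α : ℝ) (hα : α = Real.pi ^ 2 * c ^ 2 / (2 * a * L ^ 2))
    (hαβ : α * (n : ℝ) ^ 2 ≠ β)
    (u : ℝ → ℝ → ℝ)
    (hu : ∀ x t : ℝ, u x t = Real.cos (Real.pi * n * (L - ℓ + x) / L)
        * (Real.exp (-β * t) - Real.exp (-(α * (n : ℝ) ^ 2) * t))
        / (α * (n : ℝ) ^ 2 - β)) :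
    ∀ x t : ℝ,
      deriv (fun τ => u x τ) t
        = (c ^ 2 / (2 * a)) * deriv (deriv (fun ξ => u ξ t)) x
          + Real.cos (Real.pi * n * (L - ℓ + x) / L) * Real.exp (-β * t) := by
  intro x t
  set k : ℝ := Real.pi * n / L with hk
  set A : ℝ := α * (n : ℝ) ^ 2 with hA
  set b : ℝ := L - ℓ with hb
  have hL0 : L ≠ 0 := ne_of_gt hL
  have harg : ∀ ξ : ℝ, Real.pi * n * (L - ℓ + ξ) / L = k * (b + ξ) := by
    intro ξ; rw [hk, hb, div_mul_eq_mul_div]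
  have hrw : ∀ ξ τ : ℝ, u ξ τ =
      Real.cos (k * (b + ξ)) * ((Real.exp (-β * τ) - Real.exp (-A * τ)) / (A - β)) := by
    intro ξ τ
    rw [hu, harg]
    ring
  -- time derivative
  have hT : HasDerivAt (fun τ => u x τ)
      (Real.cos (k * (b + x)) *
        ((Real.exp (-β * t) * (-β) - Real.exp (-A * t) * (-A)) / (A - β))) t := by
    have h1 : HasDerivAt (fun τ : ℝ => Real.exp (-β * τ)) (Real.exp (-β * t) * (-β)) t := by
      simpa using ((hasDerivAt_id t).const_mul (-β)).exp
    have h2 : HasDerivAt (fun τ : ℝ => Real.exp (-A * τ)) (Real.exp (-A * t) * (-A)) t := by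
      simpa using ((hasDerivAt_id t).const_mul (-A)).exp
    have := (((h1.sub h2).div_const (A - β)).const_mul (Real.cos (k * (b + x))))
    refine this.congr_of_eventuallyEq ?_
    filter_upwards with τ
    rw [hrw]; rfl
  -- first space derivative as a function
  have hcosd : ∀ ξ : ℝ, HasDerivAt (fun ξ : ℝ => Real.cos (k * (b + ξ)))
      (-Real.sin (k * (b + ξ)) * k) ξ := by
    intro ξ
    have hi : HasDerivAt (fun ξ : ℝ => k * (b + ξ)) k ξ := by
      simpa using ((hasDerivAt_id ξ).const_add b).const_mul k
    simpa using hi.cos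
  set E : ℝ := (Real.exp (-β * t) - Real.exp (-A * t)) / (A - β) with hE
  have hX1 : deriv (fun ξ => u ξ t) = fun ξ => -Real.sin (k * (b + ξ)) * k * E := by
    funext ξ
    have := ((hcosd ξ).mul_const E)
    have h2 : HasDerivAt (fun ξ => u ξ t) (-Real.sin (k * (b + ξ)) * k * E) ξ := by
      refine this.congr_of_eventuallyEq ?_
      filter_upwards with ζ
      rw [hrw]
    exact h2.deriv
  have hX2 : HasDerivAt (fun ξ => -Real.sin (k * (b + ξ)) * k * E)
      (-(Real.cos (k * (b + x)) * k) * k * E) x := by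
    have hi : HasDerivAt (fun ξ : ℝ => k * (b + ξ)) k x := by
      simpa using ((hasDerivAt_id x).const_add b).const_mul k
    have := ((hi.sin.const_mul (-1)).mul_const k).mul_const E
    rw [show (fun ξ => -Real.sin (k * (b + ξ)) * k * E) = (fun y => -1 * Real.sin (k * (b + y)) * k * E) by funext ξ; ring]
    exact this.congr_deriv (by ring)
  rw [hT.deriv, hX1, hX2.deriv, harg, hE]
  have hD : A - β ≠ 0 := sub_ne_zero.mpr hαβ
  have hkey : c ^ 2 / (2 * a) * k ^ 2 = A := by
    rw [hA, hα, hk]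
    field_simp
  have ha0 : (2 : ℝ) * a ≠ 0 := by positivity
  have : c ^ 2 / (2 * a) * (-(Real.cos (k * (b + x)) * k) * k * E)
      = -(A * (Real.cos (k * (b + x)) * E)) := by
    have : c ^ 2 / (2 * a) * (-(Real.cos (k * (b + x)) * k) * k * E)
        = -((c ^ 2 / (2 * a) * k ^ 2) * (Real.cos (k * (b + x)) * E)) := by ring
    rw [this, hkey]
  rw [this, hE]
  field_simp
  ring
end

section
/- Let a, c, L, β be positive reals, ℓ, x, P_in, G₀, K, g real, and set α = π²·c²/(2a·L²); assume α·n² ≠ β for every positive natural number n. Define P₂(x,t) = P_in − 2a·G₀·x − (K·g·P_in/(4a·L))·[(1 − e^{−βt})/β + 2·∑'_{n≥1} (−1)^n·cos(π·n·(L−ℓ+x)/L)·(e^{−βt} − e^{−α n² t})/(α n² − β)], where ∑' denotes the topological sum (tsum). Then as t → ∞, P₂(x,t) tends to the quasi-stationary value P_in − 2a·G₀·x − K·g·P_in/(4a·L·β). -/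
open Real Filter

theorem pressure_quasi_stationary_limit
    (a c L β ℓ x P_in G₀ K g : ℝ)
    (ha : 0 < a) (hc : 0 < c) (hL : 0 < L) (hβ : 0 < β)
    (α : ℝ) (hα : α = Real.pi ^ 2 * c ^ 2 / (2 * a * L ^ 2))
    (hαβ : ∀ n : ℕ+, α * (n : ℝ) ^ 2 ≠ β)
    (P₂ : ℝ → ℝ → ℝ)
    (hP₂ : ∀ x t : ℝ, P₂ x t = P_in - 2 * a * G₀ * x
        - (K * g * P_in / (4 * a * L)) *
          ((1 - Real.exp (-β * t)) / β
            + 2 * ∑' n : ℕ+, (-1 : ℝ) ^ (n : ℕ)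
                * Real.cos (Real.pi * (n : ℝ) * (L - ℓ + x) / L)
                * (Real.exp (-β * t) - Real.exp (-(α * (n : ℝ) ^ 2) * t))
                / (α * (n : ℝ) ^ 2 - β))) :
    Tendsto (fun t : ℝ => P₂ x t) atTop
      (nhds (P_in - 2 * a * G₀ * x - K * g * P_in / (4 * a * L * β))) := by
  have hα0 : 0 < α := by
    rw [hα]; positivity
  -- exp(-β t) → 0
  have hexpβ : Tendsto (fun t : ℝ => Real.exp (-β * t)) atTop (nhds 0) := by
    have : Tendsto (fun t : ℝ => β * t) atTop atTop :=
      (tendsto_const_mul_atTop_of_pos hβ).mpr tendsto_id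
    simpa [Function.comp_def, neg_mul] using tendsto_exp_neg_atTop_nhds_zero.comp this
  -- for each n, exp(-(α n²) t) → 0
  have hexpn : ∀ n : ℕ+, Tendsto (fun t : ℝ => Real.exp (-(α * (n : ℝ) ^ 2) * t))
      atTop (nhds 0) := by
    intro n
    have hn : (0 : ℝ) < α * (n : ℝ) ^ 2 := by positivity
    have : Tendsto (fun t : ℝ => (α * (n : ℝ) ^ 2) * t) atTop atTop :=
      (tendsto_const_mul_atTop_of_pos hn).mpr tendsto_id
    simpa [Function.comp_def, neg_mul] using tendsto_exp_neg_atTop_nhds_zero.comp this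
  -- the series term tends to 0
  have hsum0 : Tendsto (fun t : ℝ => ∑' n : ℕ+, (-1 : ℝ) ^ (n : ℕ)
      * Real.cos (Real.pi * (n : ℝ) * (L - ℓ + x) / L)
      * (Real.exp (-β * t) - Real.exp (-(α * (n : ℝ) ^ 2) * t))
      / (α * (n : ℝ) ^ 2 - β)) atTop (nhds 0) := by
    have hbound_sum : Summable (fun n : ℕ+ => 2 / |α * (n : ℝ) ^ 2 - β|) := by
      have hg : Summable (fun n : ℕ+ => (1 : ℝ) / ((n : ℕ) : ℝ) ^ 2) := by
        have h0 : Summable (fun n : ℕ => (1 : ℝ) / (n : ℝ) ^ 2) :=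
          Real.summable_one_div_nat_pow.mpr one_lt_two
        exact h0.comp_injective PNat.coe_injective
      apply summable_of_isBigO hg
      rw [Asymptotics.isBigO_iff]
      refine ⟨4 / α, ?_⟩
      rw [Filter.eventually_cofinite]
      have hfin : {n : ℕ+ | ¬‖2 / |α * (n : ℝ) ^ 2 - β|‖ ≤
          4 / α * ‖(1 : ℝ) / ((n : ℕ) : ℝ) ^ 2‖} ⊆
          (fun n : ℕ+ => (n : ℕ)) ⁻¹' Set.Iic ⌈Real.sqrt (2 * β / α)⌉₊ := by
        intro n hn
        simp only [Set.mem_setOf_eq] at hn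
        simp only [Set.mem_preimage, Set.mem_Iic]
        by_contra hcon
        push_neg at hcon
        apply hn
        have hn1 : (0:ℝ) < ((n : ℕ) : ℝ) := by positivity
        have hge : Real.sqrt (2 * β / α) < ((n : ℕ) : ℝ) := by
          calc Real.sqrt (2 * β / α) ≤ (⌈Real.sqrt (2 * β / α)⌉₊ : ℝ) :=
                Nat.le_ceil _
            _ < ((n : ℕ) : ℝ) := by exact_mod_cast hcon
        have hsq : 2 * β / α < ((n : ℕ) : ℝ) ^ 2 := by
          have := Real.sqrt_nonneg (2 * β / α)
          nlinarith [Real.sq_sqrt (by positivity : (0:ℝ) ≤ 2 * β / α)]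
        have h2β : 2 * β < α * ((n : ℕ) : ℝ) ^ 2 := by
          rw [div_lt_iff₀ hα0] at hsq; linarith [hsq]
        have habs : α * ((n : ℕ) : ℝ) ^ 2 / 2 ≤ |α * ((n : ℕ) : ℝ) ^ 2 - β| := by
          rw [abs_of_pos (by linarith)]
          linarith
        have hpos : (0:ℝ) < α * ((n : ℕ) : ℝ) ^ 2 / 2 := by positivity
        have hden0 : (0:ℝ) < |α * ((n : ℕ) : ℝ) ^ 2 - β| :=
          abs_pos.mpr (sub_ne_zero.mpr (hαβ n))
        rw [Real.norm_eq_abs, abs_of_nonneg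
            (by positivity : (0:ℝ) ≤ 2 / |α * ((n : ℕ) : ℝ) ^ 2 - β|),
          Real.norm_eq_abs, abs_of_nonneg
            (by positivity : (0:ℝ) ≤ 1 / ((n : ℕ) : ℝ) ^ 2)]
        rw [div_le_iff₀ hden0]
        have : 4 / α * (1 / ((n : ℕ) : ℝ) ^ 2) * (α * ((n : ℕ) : ℝ) ^ 2 / 2) = 2 := by
          field_simp
          ring
        calc (2:ℝ) = 4 / α * (1 / ((n : ℕ) : ℝ) ^ 2) * (α * ((n : ℕ) : ℝ) ^ 2 / 2) :=
              this.symm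
          _ ≤ 4 / α * (1 / ((n : ℕ) : ℝ) ^ 2) * |α * ((n : ℕ) : ℝ) ^ 2 - β| := by
              apply mul_le_mul_of_nonneg_left habs
              positivity
      exact Set.Finite.subset ((Set.finite_Iic _).preimage
        (Set.injOn_of_injective PNat.coe_injective)) hfin
    have := tendsto_tsum_of_dominated_convergence (𝓕 := (atTop : Filter ℝ))
      (f := fun (t : ℝ) (n : ℕ+) => (-1 : ℝ) ^ (n : ℕ)
        * Real.cos (Real.pi * (n : ℝ) * (L - ℓ + x) / L)
        * (Real.exp (-β * t) - Real.exp (-(α * (n : ℝ) ^ 2) * t))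
        / (α * (n : ℝ) ^ 2 - β))
      (g := fun _ : ℕ+ => (0 : ℝ))
      (bound := fun n : ℕ+ => 2 / |α * (n : ℝ) ^ 2 - β|)
      hbound_sum ?_ ?_
    · simpa using this
    · intro n
      have h1 : Tendsto (fun t : ℝ => Real.exp (-β * t) -
          Real.exp (-(α * (n : ℝ) ^ 2) * t)) atTop (nhds 0) := by
        simpa using (hexpβ.sub (hexpn n))
      have := (h1.const_mul ((-1 : ℝ) ^ (n : ℕ)
        * Real.cos (Real.pi * (n : ℝ) * (L - ℓ + x) / L))).div_const
        (α * (n : ℝ) ^ 2 - β)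
      simpa [mul_assoc, mul_comm, mul_left_comm] using this
    · filter_upwards [eventually_ge_atTop (0 : ℝ)] with t ht
      intro n
      have he1 : Real.exp (-β * t) ≤ 1 := by
        rw [Real.exp_le_one_iff]
        have : 0 ≤ β * t := by positivity
        linarith [this]
      have he2 : Real.exp (-(α * (n : ℝ) ^ 2) * t) ≤ 1 := by
        rw [Real.exp_le_one_iff]
        have : 0 ≤ (α * (n : ℝ) ^ 2) * t := by positivity
        linarith [this]
      have he1' : 0 < Real.exp (-β * t) := Real.exp_pos _
      have he2' : 0 < Real.exp (-(α * (n : ℝ) ^ 2) * t) := Real.exp_pos _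
      have hden : 0 < |α * (n : ℝ) ^ 2 - β| :=
        abs_pos.mpr (sub_ne_zero.mpr (hαβ n))
      have hdiff : |Real.exp (-β * t) - Real.exp (-(α * (n : ℝ) ^ 2) * t)| ≤ 2 := by
        rw [abs_sub_le_iff]; constructor <;> linarith
      have hnum : |(-1 : ℝ) ^ (n : ℕ)
          * Real.cos (Real.pi * (n : ℝ) * (L - ℓ + x) / L)
          * (Real.exp (-β * t) - Real.exp (-(α * (n : ℝ) ^ 2) * t))| ≤ 2 := by
        rw [abs_mul, abs_mul, abs_pow, abs_neg, abs_one, one_pow, one_mul]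
        have hcos := Real.abs_cos_le_one (Real.pi * (n : ℝ) * (L - ℓ + x) / L)
        have h0 : (0:ℝ) ≤ |Real.exp (-β * t) - Real.exp (-(α * (n : ℝ) ^ 2) * t)| :=
          abs_nonneg _
        nlinarith
      rw [Real.norm_eq_abs, abs_div]
      gcongr
  -- assemble
  have h1 : Tendsto (fun t : ℝ => (1 - Real.exp (-β * t)) / β) atTop
      (nhds ((1 - 0) / β)) := (tendsto_const_nhds.sub hexpβ).div_const β
  have hfinal := (((h1.add (hsum0.const_mul 2)).const_mul
      (K * g * P_in / (4 * a * L))).const_sub (P_in - 2 * a * G₀ * x))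
  have heq : P_in - 2 * a * G₀ * x - K * g * P_in / (4 * a * L * β)
      = P_in - 2 * a * G₀ * x
        - K * g * P_in / (4 * a * L) * ((1 - 0) / β + 2 * 0) := by
    have ha' : (a : ℝ) ≠ 0 := ne_of_gt ha
    have hL' : (L : ℝ) ≠ 0 := ne_of_gt hL
    have hβ' : (β : ℝ) ≠ 0 := ne_of_gt hβ
    field_simp
    ring
  rw [heq]
  refine hfinal.congr fun t => ?_
  rw [hP₂]
end

section
/- Let a, c, L be positive reals, ℓ, β, P_in, G₀, K, g real with β ≠ 0, set α = π²·c²/(2a·L²), assume α·n² ≠ β for all positive naturals n, and fix N ∈ ℕ and t ∈ ℝ. Define the truncated solutions P₁^N(x) = P_in − 2a·G₀·x − (K·g·P_in/(4a·L))·[(1 − e^{−βt})/β + 2·∑_{n=1}^{N} (−1)^n·cos(π·n·(L−ℓ−x)/L)·(e^{−βt} − e^{−α n² t})/(α n² − β)] and P₂^N(x) = P_in − 2a·G₀·x − (K·g·P_in/(4a·L))·[(1 − e^{−βt})/β + 2·∑_{n=1}^{N} (−1)^n·cos(π·n·(L−ℓ+x)/L)·(e^{−βt} − e^{−α n² t})/(α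 n² − β)]. Then the derivative of x ↦ P₁^N(x) + P₂^N(x), evaluated at x = 0, equals −4a·G₀. -/
open Real

theorem truncated_inlet_flow_condition
    (a c L ℓ β P_in G₀ K g : ℝ)
    (ha : 0 < a) (hc : 0 < c) (hL : 0 < L) (hβ : β ≠ 0)
    (α : ℝ) (hα : α = Real.pi ^ 2 * c ^ 2 / (2 * a * L ^ 2))
    (hαβ : ∀ n : ℕ, 0 < n → α * (n : ℝ) ^ 2 ≠ β)
    (N : ℕ) (t : ℝ)
    (P₁N P₂N : ℝ → ℝ)
    (hP₁N : ∀ x : ℝ, P₁N x = P_in - 2 * a * G₀ * x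
        - (K * g * P_in / (4 * a * L)) *
          ((1 - Real.exp (-β * t)) / β
            + 2 * ∑ n ∈ Finset.Icc 1 N, (-1 : ℝ) ^ n
                * Real.cos (Real.pi * (n : ℝ) * (L - ℓ - x) / L)
                * (Real.exp (-β * t) - Real.exp (-(α * (n : ℝ) ^ 2) * t))
                / (α * (n : ℝ) ^ 2 - β)))
    (hP₂N : ∀ x : ℝ, P₂N x = P_in - 2 * a * G₀ * x
        - (K * g * P_in / (4 * a * L)) *
          ((1 - Real.exp (-β * t)) / β
            + 2 * ∑ n ∈ Finset.Icc 1 N, (-1 : ℝ) ^ n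
                * Real.cos (Real.pi * (n : ℝ) * (L - ℓ + x) / L)
                * (Real.exp (-β * t) - Real.exp (-(α * (n : ℝ) ^ 2) * t))
                / (α * (n : ℝ) ^ 2 - β))) :
    deriv (fun x => P₁N x + P₂N x) 0 = -(4 * a * G₀) := by
  set C : ℝ := K * g * P_in / (4 * a * L) with hC
  set A : ℝ := (1 - Real.exp (-β * t)) / β with hA
  set E : ℕ → ℝ := fun n => Real.exp (-β * t) - Real.exp (-(α * (n : ℝ) ^ 2) * t) with hE
  set D : ℕ → ℝ := fun n => α * (n : ℝ) ^ 2 - β with hD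
  -- derivatives of the inner linear maps
  have hg1 : ∀ n : ℕ, HasDerivAt (fun x : ℝ => Real.pi * (n : ℝ) * (L - ℓ - x) / L)
      (-(Real.pi * (n : ℝ) / L)) 0 := by
    intro n
    have h : (fun x : ℝ => Real.pi * (n : ℝ) * (L - ℓ - x) / L)
        = fun x : ℝ => Real.pi * (n : ℝ) * (L - ℓ) / L + (-(Real.pi * (n : ℝ) / L)) * x := by
      funext x; ring
    rw [h]
    simpa using ((hasDerivAt_id (0 : ℝ)).const_mul
      (-(Real.pi * (n : ℝ) / L))).const_add (Real.pi * (n : ℝ) * (L - ℓ) / L)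
  have hg2 : ∀ n : ℕ, HasDerivAt (fun x : ℝ => Real.pi * (n : ℝ) * (L - ℓ + x) / L)
      (Real.pi * (n : ℝ) / L) 0 := by
    intro n
    have h : (fun x : ℝ => Real.pi * (n : ℝ) * (L - ℓ + x) / L)
        = fun x : ℝ => Real.pi * (n : ℝ) * (L - ℓ) / L + (Real.pi * (n : ℝ) / L) * x := by
      funext x; ring
    rw [h]
    simpa using ((hasDerivAt_id (0 : ℝ)).const_mul
      (Real.pi * (n : ℝ) / L)).const_add (Real.pi * (n : ℝ) * (L - ℓ) / L)
  -- derivatives of the truncated sums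
  have hS1 : HasDerivAt (fun x : ℝ => ∑ n ∈ Finset.Icc 1 N, (-1 : ℝ) ^ n
        * Real.cos (Real.pi * (n : ℝ) * (L - ℓ - x) / L) * E n / D n)
      (∑ n ∈ Finset.Icc 1 N, (-1 : ℝ) ^ n
        * (-Real.sin (Real.pi * (n : ℝ) * (L - ℓ - 0) / L) * (-(Real.pi * (n : ℝ) / L)))
        * E n / D n) 0 := by
    apply HasDerivAt.fun_sum
    intro n _
    exact ((((hg1 n).cos).const_mul ((-1 : ℝ) ^ n)).mul_const (E n)).div_const (D n)
  have hS2 : HasDerivAt (fun x : ℝ => ∑ n ∈ Finset.Icc 1 N, (-1 : ℝ) ^ n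
        * Real.cos (Real.pi * (n : ℝ) * (L - ℓ + x) / L) * E n / D n)
      (∑ n ∈ Finset.Icc 1 N, (-1 : ℝ) ^ n
        * (-Real.sin (Real.pi * (n : ℝ) * (L - ℓ + 0) / L) * (Real.pi * (n : ℝ) / L))
        * E n / D n) 0 := by
    apply HasDerivAt.fun_sum
    intro n _
    exact ((((hg2 n).cos).const_mul ((-1 : ℝ) ^ n)).mul_const (E n)).div_const (D n)
  have hlin : HasDerivAt (fun x : ℝ => 2 * a * G₀ * x) (2 * a * G₀) 0 := by
    simpa using (hasDerivAt_id (0 : ℝ)).const_mul (2 * a * G₀)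
  have h1 : HasDerivAt (fun x : ℝ => P_in - 2 * a * G₀ * x - C * (A + 2 * ∑ n ∈ Finset.Icc 1 N,
        (-1 : ℝ) ^ n * Real.cos (Real.pi * (n : ℝ) * (L - ℓ - x) / L) * E n / D n))
      (0 - 2 * a * G₀ - C * (2 * ∑ n ∈ Finset.Icc 1 N, (-1 : ℝ) ^ n
        * (-Real.sin (Real.pi * (n : ℝ) * (L - ℓ - 0) / L) * (-(Real.pi * (n : ℝ) / L)))
        * E n / D n)) 0 :=
    ((hasDerivAt_const (0 : ℝ) P_in).sub hlin).sub (((hS1.const_mul 2).const_add A).const_mul C)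
  have h2 : HasDerivAt (fun x : ℝ => P_in - 2 * a * G₀ * x - C * (A + 2 * ∑ n ∈ Finset.Icc 1 N,
        (-1 : ℝ) ^ n * Real.cos (Real.pi * (n : ℝ) * (L - ℓ + x) / L) * E n / D n))
      (0 - 2 * a * G₀ - C * (2 * ∑ n ∈ Finset.Icc 1 N, (-1 : ℝ) ^ n
        * (-Real.sin (Real.pi * (n : ℝ) * (L - ℓ + 0) / L) * (Real.pi * (n : ℝ) / L))
        * E n / D n)) 0 :=
    ((hasDerivAt_const (0 : ℝ) P_in).sub hlin).sub (((hS2.const_mul 2).const_add A).const_mul C)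
  have hfun : (fun x => P₁N x + P₂N x)
      = fun x : ℝ => (P_in - 2 * a * G₀ * x - C * (A + 2 * ∑ n ∈ Finset.Icc 1 N,
          (-1 : ℝ) ^ n * Real.cos (Real.pi * (n : ℝ) * (L - ℓ - x) / L) * E n / D n))
        + (P_in - 2 * a * G₀ * x - C * (A + 2 * ∑ n ∈ Finset.Icc 1 N,
          (-1 : ℝ) ^ n * Real.cos (Real.pi * (n : ℝ) * (L - ℓ + x) / L) * E n / D n)) := by
    funext x
    rw [hP₁N x, hP₂N x]
  rw [hfun, (h1.fun_add h2).deriv]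
  have hsum : (∑ n ∈ Finset.Icc 1 N, (-1 : ℝ) ^ n
        * (-Real.sin (Real.pi * (n : ℝ) * (L - ℓ - 0) / L) * (-(Real.pi * (n : ℝ) / L)))
        * E n / D n)
      + (∑ n ∈ Finset.Icc 1 N, (-1 : ℝ) ^ n
        * (-Real.sin (Real.pi * (n : ℝ) * (L - ℓ + 0) / L) * (Real.pi * (n : ℝ) / L))
        * E n / D n) = 0 := by
    rw [← Finset.sum_add_distrib]
    apply Finset.sum_eq_zero
    intro n _
    simp only [sub_zero, add_zero]
    ring
  simp only [sub_zero, add_zero] at hsum ⊢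
  linear_combination (-(2 * C)) * hsum
end

section
/- Let a, c, L be positive reals, ℓ, β, P_in, G₀, K, g real with β ≠ 0, set α = π²·c²/(2a·L²), assume α·n² ≠ β for all positive naturals n, and fix N ∈ ℕ and t ∈ ℝ. Define the truncated solutions P₁^N(x) = P_in − 2a·G₀·x − (K·g·P_in/(4a·L))·[(1 − e^{−βt})/β + 2·∑_{n=1}^{N} (−1)^n·cos(π·n·(L−ℓ−x)/L)·(e^{−βt} − e^{−α n² t})/(α n² − β)] and P₃^N(x) = P_in − 2a·G₀·x − (K·g·P_in/(4a·L))·[(1 − e^{−βt})/β + 2·∑_{n=1}^{N} (−1)^n·cos(π·n·(L+ℓ−x)/L)·(e^{−βt} − e^{−α n² t})/(α n² − β)]. Then the derivative of x ↦ P₁^N(x) + P₃^N(x), evaluated at x = L, equals −4a·G₀. -/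
open Real

private lemma cos_deriv_aux (n C L : ℝ) :
    HasDerivAt (fun x => Real.cos (Real.pi * n * (C - x) / L))
      (Real.pi * n / L * Real.sin (Real.pi * n * (C - L) / L)) L := by
  have h1 : HasDerivAt (fun x : ℝ => Real.pi * n * (C - x) / L)
      (-(Real.pi * n / L)) L := by
    have h := (((hasDerivAt_id L).const_sub C).const_mul (Real.pi * n)).div_const L
    refine h.congr_deriv ?_
    ring
  have h2 := h1.cos
  convert h2 using 1
  ring

private lemma P_deriv_aux (a L ℓ β P_in G₀ K g α : ℝ) (N : ℕ) (t : ℝ) (C : ℝ) :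
    HasDerivAt (fun x => P_in - 2 * a * G₀ * x
        - (K * g * P_in / (4 * a * L)) *
          ((1 - Real.exp (-β * t)) / β
            + 2 * ∑ n ∈ Finset.Icc 1 N, (-1 : ℝ) ^ n
                * Real.cos (Real.pi * (n : ℝ) * (C - x) / L)
                * (Real.exp (-β * t) - Real.exp (-(α * (n : ℝ) ^ 2) * t))
                / (α * (n : ℝ) ^ 2 - β)))
      (-(2 * a * G₀) - (K * g * P_in / (4 * a * L)) *
          (2 * ∑ n ∈ Finset.Icc 1 N, ((-1 : ℝ) ^ n
                * (Real.pi * (n : ℝ) / L * Real.sin (Real.pi * (n : ℝ) * (C - L) / L)))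
                * (Real.exp (-β * t) - Real.exp (-(α * (n : ℝ) ^ 2) * t))
                / (α * (n : ℝ) ^ 2 - β))) L := by
  have hsum : HasDerivAt (fun x => ∑ n ∈ Finset.Icc 1 N, (-1 : ℝ) ^ n
                * Real.cos (Real.pi * (n : ℝ) * (C - x) / L)
                * (Real.exp (-β * t) - Real.exp (-(α * (n : ℝ) ^ 2) * t))
                / (α * (n : ℝ) ^ 2 - β))
      (∑ n ∈ Finset.Icc 1 N, ((-1 : ℝ) ^ n
                * (Real.pi * (n : ℝ) / L * Real.sin (Real.pi * (n : ℝ) * (C - L) / L)))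
                * (Real.exp (-β * t) - Real.exp (-(α * (n : ℝ) ^ 2) * t))
                / (α * (n : ℝ) ^ 2 - β)) L := by
    apply HasDerivAt.fun_sum
    intro n _
    exact (((cos_deriv_aux (n : ℝ) C L).const_mul ((-1 : ℝ) ^ n)).mul_const
      (Real.exp (-β * t) - Real.exp (-(α * (n : ℝ) ^ 2) * t))).div_const
      (α * (n : ℝ) ^ 2 - β)
  have hx : HasDerivAt (fun x : ℝ => 2 * a * G₀ * x) (2 * a * G₀) L := by
    simpa using (hasDerivAt_id L).const_mul (2 * a * G₀)
  have hbig := ((hsum.const_mul 2).const_add ((1 - Real.exp (-β * t)) / β)).const_mul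
    (K * g * P_in / (4 * a * L))
  have := ((hasDerivAt_const L P_in).sub hx).sub hbig
  refine this.congr_deriv ?_
  ring

theorem truncated_outlet_flow_condition
    (a c L ℓ β P_in G₀ K g : ℝ)
    (ha : 0 < a) (hc : 0 < c) (hL : 0 < L) (hβ : β ≠ 0)
    (α : ℝ) (hα : α = Real.pi ^ 2 * c ^ 2 / (2 * a * L ^ 2))
    (hαβ : ∀ n : ℕ, 0 < n → α * (n : ℝ) ^ 2 ≠ β)
    (N : ℕ) (t : ℝ)
    (P₁N P₃N : ℝ → ℝ)
    (hP₁N : ∀ x : ℝ, P₁N x = P_in - 2 * a * G₀ * x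
        - (K * g * P_in / (4 * a * L)) *
          ((1 - Real.exp (-β * t)) / β
            + 2 * ∑ n ∈ Finset.Icc 1 N, (-1 : ℝ) ^ n
                * Real.cos (Real.pi * (n : ℝ) * (L - ℓ - x) / L)
                * (Real.exp (-β * t) - Real.exp (-(α * (n : ℝ) ^ 2) * t))
                / (α * (n : ℝ) ^ 2 - β)))
    (hP₃N : ∀ x : ℝ, P₃N x = P_in - 2 * a * G₀ * x
        - (K * g * P_in / (4 * a * L)) *
          ((1 - Real.exp (-β * t)) / β
            + 2 * ∑ n ∈ Finset.Icc 1 N, (-1 : ℝ) ^ n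
                * Real.cos (Real.pi * (n : ℝ) * (L + ℓ - x) / L)
                * (Real.exp (-β * t) - Real.exp (-(α * (n : ℝ) ^ 2) * t))
                / (α * (n : ℝ) ^ 2 - β))) :
    deriv (fun x => P₁N x + P₃N x) L = -(4 * a * G₀) := by
  have hP1 : P₁N = fun x => P_in - 2 * a * G₀ * x
        - (K * g * P_in / (4 * a * L)) *
          ((1 - Real.exp (-β * t)) / β
            + 2 * ∑ n ∈ Finset.Icc 1 N, (-1 : ℝ) ^ n
                * Real.cos (Real.pi * (n : ℝ) * ((L - ℓ) - x) / L)
                * (Real.exp (-β * t) - Real.exp (-(α * (n : ℝ) ^ 2) * t))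
                / (α * (n : ℝ) ^ 2 - β)) := by
    funext x
    rw [hP₁N x]
  have hP3 : P₃N = fun x => P_in - 2 * a * G₀ * x
        - (K * g * P_in / (4 * a * L)) *
          ((1 - Real.exp (-β * t)) / β
            + 2 * ∑ n ∈ Finset.Icc 1 N, (-1 : ℝ) ^ n
                * Real.cos (Real.pi * (n : ℝ) * ((L + ℓ) - x) / L)
                * (Real.exp (-β * t) - Real.exp (-(α * (n : ℝ) ^ 2) * t))
                / (α * (n : ℝ) ^ 2 - β)) := by
    funext x
    rw [hP₃N x]
  have h1 := P_deriv_aux a L ℓ β P_in G₀ K g α N t (L - ℓ)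
  have h3 := P_deriv_aux a L ℓ β P_in G₀ K g α N t (L + ℓ)
  rw [hP1, hP3]
  have hd := (h1.fun_add h3).deriv
  rw [hd]
  have hcancel : (∑ n ∈ Finset.Icc 1 N, ((-1 : ℝ) ^ n
                * (Real.pi * (n : ℝ) / L * Real.sin (Real.pi * (n : ℝ) * ((L - ℓ) - L) / L)))
                * (Real.exp (-β * t) - Real.exp (-(α * (n : ℝ) ^ 2) * t))
                / (α * (n : ℝ) ^ 2 - β))
      + (∑ n ∈ Finset.Icc 1 N, ((-1 : ℝ) ^ n
                * (Real.pi * (n : ℝ) / L * Real.sin (Real.pi * (n : ℝ) * ((L + ℓ) - L) / L)))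
                * (Real.exp (-β * t) - Real.exp (-(α * (n : ℝ) ^ 2) * t))
                / (α * (n : ℝ) ^ 2 - β)) = 0 := by
    rw [← Finset.sum_add_distrib]
    apply Finset.sum_eq_zero
    intro n _
    have harg : Real.pi * (n : ℝ) * ((L - ℓ) - L) / L
        = -(Real.pi * (n : ℝ) * ((L + ℓ) - L) / L) := by ring
    rw [harg, Real.sin_neg]
    ring
  linear_combination (-(K * g * P_in / (4 * a * L) * 2)) * hcancel
end

section
/- Let a, c, L be positive reals, ℓ, β, P_in, G₀, K, g real with β ≠ 0, set α = π²·c²/(2a·L²), assume α·n² ≠ β for all positive naturals n, and fix N ∈ ℕ. Define P₂^N(x,t) = P_in − 2a·G₀·x − (K·g·P_in/(4a·L))·[(1 − e^{−βt})/β + 2·∑_{n=1}^{N} (−1)^n·cos(π·n·(L−ℓ+x)/L)·(e^{−βt} − e^{−α n² t})/(α n² − β)]. Then for all x, t ∈ ℝ, ∂P₂^N/∂t (x,t) − (c²/(2a))·∂²P₂^N/∂x² (x,t) = −(K·g·P_in/(4a·L))·e^{−βt}·(1 + 2·∑_{n=1}^{N} (−1)^n·cos(π·n·(L−ℓ+x)/L)),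 i.e., the truncated series solves the heat equation with source term equal to the N-term Fourier approximation of the point leakage source localized at x = ℓ, modulated by the exponentially decaying leakage rate e^{−βt}. -/
open Real

private lemma hde_exp (r s : ℝ) :
    HasDerivAt (fun τ : ℝ => Real.exp (r * τ)) (r * Real.exp (r * s)) s := by
  simpa [mul_comm] using ((hasDerivAt_id s).const_mul r).exp

theorem truncated_solution_solves_forced_heat_equation
    (a c L ℓ β P_in G₀ K g : ℝ)
    (ha : 0 < a) (hc : 0 < c) (hL : 0 < L) (hβ : β ≠ 0)
    (α : ℝ) (hα : α = Real.pi ^ 2 * c ^ 2 / (2 * a * L ^ 2))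
    (hαβ : ∀ n : ℕ, 0 < n → α * (n : ℝ) ^ 2 ≠ β)
    (N : ℕ)
    (P₂N : ℝ → ℝ → ℝ)
    (hP₂N : ∀ x t : ℝ, P₂N x t = P_in - 2 * a * G₀ * x
        - (K * g * P_in / (4 * a * L)) *
          ((1 - Real.exp (-β * t)) / β
            + 2 * ∑ n ∈ Finset.Icc 1 N, (-1 : ℝ) ^ n
                * Real.cos (Real.pi * (n : ℝ) * (L - ℓ + x) / L)
                * (Real.exp (-β * t) - Real.exp (-(α * (n : ℝ) ^ 2) * t))
                / (α * (n : ℝ) ^ 2 - β))) :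
    ∀ x t : ℝ,
      deriv (fun τ => P₂N x τ) t
        - (c ^ 2 / (2 * a)) * deriv (deriv (fun ξ => P₂N ξ t)) x
      = -(K * g * P_in / (4 * a * L)) * Real.exp (-β * t)
          * (1 + 2 * ∑ n ∈ Finset.Icc 1 N, (-1 : ℝ) ^ n
              * Real.cos (Real.pi * (n : ℝ) * (L - ℓ + x) / L)) := by
  intro x t
  have ha' : a ≠ 0 := ne_of_gt ha
  have hL' : L ≠ 0 := ne_of_gt hL
  -- time derivative
  have hfun_t : (fun τ => P₂N x τ) = (fun τ : ℝ => P_in - 2 * a * G₀ * x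
        - (K * g * P_in / (4 * a * L)) *
          ((1 - Real.exp (-β * τ)) / β
            + 2 * ∑ n ∈ Finset.Icc 1 N, (-1 : ℝ) ^ n
                * Real.cos (Real.pi * (n : ℝ) * (L - ℓ + x) / L)
                * (Real.exp (-β * τ) - Real.exp (-(α * (n : ℝ) ^ 2) * τ))
                / (α * (n : ℝ) ^ 2 - β))) := funext fun τ => hP₂N x τ
  have hsum_t : HasDerivAt (fun τ : ℝ => ∑ n ∈ Finset.Icc 1 N, (-1 : ℝ) ^ n
                * Real.cos (Real.pi * (n : ℝ) * (L - ℓ + x) / L)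
                * (Real.exp (-β * τ) - Real.exp (-(α * (n : ℝ) ^ 2) * τ))
                / (α * (n : ℝ) ^ 2 - β))
      (∑ n ∈ Finset.Icc 1 N,
        ((-1 : ℝ) ^ n * Real.cos (Real.pi * (n : ℝ) * (L - ℓ + x) / L)
          * (-β * Real.exp (-β * t) - -(α * (n : ℝ) ^ 2) * Real.exp (-(α * (n : ℝ) ^ 2) * t)))
          / (α * (n : ℝ) ^ 2 - β)) t :=
    HasDerivAt.fun_sum fun n _ =>
      (((hde_exp (-β) t).sub (hde_exp (-(α * (n : ℝ) ^ 2)) t)).const_mul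
        ((-1 : ℝ) ^ n * Real.cos (Real.pi * (n : ℝ) * (L - ℓ + x) / L))).div_const
        (α * (n : ℝ) ^ 2 - β)
  have htime : HasDerivAt (fun τ : ℝ => P_in - 2 * a * G₀ * x
        - (K * g * P_in / (4 * a * L)) *
          ((1 - Real.exp (-β * τ)) / β
            + 2 * ∑ n ∈ Finset.Icc 1 N, (-1 : ℝ) ^ n
                * Real.cos (Real.pi * (n : ℝ) * (L - ℓ + x) / L)
                * (Real.exp (-β * τ) - Real.exp (-(α * (n : ℝ) ^ 2) * τ))
                / (α * (n : ℝ) ^ 2 - β)))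
      (-((K * g * P_in / (4 * a * L)) *
          (-(-β * Real.exp (-β * t)) / β
            + 2 * ∑ n ∈ Finset.Icc 1 N,
                ((-1 : ℝ) ^ n * Real.cos (Real.pi * (n : ℝ) * (L - ℓ + x) / L)
                  * (-β * Real.exp (-β * t) - -(α * (n : ℝ) ^ 2) * Real.exp (-(α * (n : ℝ) ^ 2) * t)))
                  / (α * (n : ℝ) ^ 2 - β)))) t :=
    (((((hde_exp (-β) t).const_sub 1).div_const β).add (hsum_t.const_mul 2)).const_mul
        (K * g * P_in / (4 * a * L))).const_sub (P_in - 2 * a * G₀ * x)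
  -- first space derivative
  have hfun_x : (fun ξ => P₂N ξ t) = (fun ξ : ℝ => P_in - 2 * a * G₀ * ξ
        - (K * g * P_in / (4 * a * L)) *
          ((1 - Real.exp (-β * t)) / β
            + 2 * ∑ n ∈ Finset.Icc 1 N, (-1 : ℝ) ^ n
                * Real.cos (Real.pi * (n : ℝ) * (L - ℓ + ξ) / L)
                * (Real.exp (-β * t) - Real.exp (-(α * (n : ℝ) ^ 2) * t))
                / (α * (n : ℝ) ^ 2 - β))) := funext fun ξ => hP₂N ξ t
  have hu : ∀ (n : ℕ) (y : ℝ),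
      HasDerivAt (fun ξ : ℝ => Real.pi * (n : ℝ) * (L - ℓ + ξ) / L)
        (Real.pi * (n : ℝ) * 1 / L) y := fun n y =>
    (((hasDerivAt_id y).const_add (L - ℓ)).const_mul (Real.pi * (n : ℝ))).div_const L
  have hx1 : ∀ y : ℝ, HasDerivAt (fun ξ : ℝ => P_in - 2 * a * G₀ * ξ
        - (K * g * P_in / (4 * a * L)) *
          ((1 - Real.exp (-β * t)) / β
            + 2 * ∑ n ∈ Finset.Icc 1 N, (-1 : ℝ) ^ n
                * Real.cos (Real.pi * (n : ℝ) * (L - ℓ + ξ) / L)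
                * (Real.exp (-β * t) - Real.exp (-(α * (n : ℝ) ^ 2) * t))
                / (α * (n : ℝ) ^ 2 - β)))
      (-(2 * a * G₀ * 1)
        - (K * g * P_in / (4 * a * L)) *
          (0 + 2 * ∑ n ∈ Finset.Icc 1 N,
            ((-1 : ℝ) ^ n * (-Real.sin (Real.pi * (n : ℝ) * (L - ℓ + y) / L) * (Real.pi * (n : ℝ) * 1 / L))
              * (Real.exp (-β * t) - Real.exp (-(α * (n : ℝ) ^ 2) * t)))
              / (α * (n : ℝ) ^ 2 - β))) y := by
    intro y
    have hsum : HasDerivAt (fun ξ : ℝ => ∑ n ∈ Finset.Icc 1 N, (-1 : ℝ) ^ n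
                * Real.cos (Real.pi * (n : ℝ) * (L - ℓ + ξ) / L)
                * (Real.exp (-β * t) - Real.exp (-(α * (n : ℝ) ^ 2) * t))
                / (α * (n : ℝ) ^ 2 - β))
        (∑ n ∈ Finset.Icc 1 N,
          ((-1 : ℝ) ^ n * (-Real.sin (Real.pi * (n : ℝ) * (L - ℓ + y) / L) * (Real.pi * (n : ℝ) * 1 / L))
            * (Real.exp (-β * t) - Real.exp (-(α * (n : ℝ) ^ 2) * t)))
            / (α * (n : ℝ) ^ 2 - β)) y :=
      HasDerivAt.fun_sum fun n _ =>
        ((((hu n y).cos).const_mul ((-1 : ℝ) ^ n)).mul_const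
          (Real.exp (-β * t) - Real.exp (-(α * (n : ℝ) ^ 2) * t))).div_const (α * (n : ℝ) ^ 2 - β)
    exact (((hasDerivAt_id y).const_mul (2 * a * G₀)).const_sub P_in).sub
      (((hasDerivAt_const y ((1 - Real.exp (-β * t)) / β)).add (hsum.const_mul 2)).const_mul
        (K * g * P_in / (4 * a * L)))
  have hd1 : deriv (fun ξ => P₂N ξ t) = (fun y : ℝ => -(2 * a * G₀ * 1)
        - (K * g * P_in / (4 * a * L)) *
          (0 + 2 * ∑ n ∈ Finset.Icc 1 N,
            ((-1 : ℝ) ^ n * (-Real.sin (Real.pi * (n : ℝ) * (L - ℓ + y) / L) * (Real.pi * (n : ℝ) * 1 / L))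
              * (Real.exp (-β * t) - Real.exp (-(α * (n : ℝ) ^ 2) * t)))
              / (α * (n : ℝ) ^ 2 - β))) := by
    rw [hfun_x]; exact funext fun y => (hx1 y).deriv
  -- second space derivative
  have hx2 : HasDerivAt (fun y : ℝ => -(2 * a * G₀ * 1)
        - (K * g * P_in / (4 * a * L)) *
          (0 + 2 * ∑ n ∈ Finset.Icc 1 N,
            ((-1 : ℝ) ^ n * (-Real.sin (Real.pi * (n : ℝ) * (L - ℓ + y) / L) * (Real.pi * (n : ℝ) * 1 / L))
              * (Real.exp (-β * t) - Real.exp (-(α * (n : ℝ) ^ 2) * t)))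
              / (α * (n : ℝ) ^ 2 - β)))
      (-((K * g * P_in / (4 * a * L)) *
          (0 + 2 * ∑ n ∈ Finset.Icc 1 N,
            ((-1 : ℝ) ^ n * (-(Real.cos (Real.pi * (n : ℝ) * (L - ℓ + x) / L) * (Real.pi * (n : ℝ) * 1 / L))
                * (Real.pi * (n : ℝ) * 1 / L))
              * (Real.exp (-β * t) - Real.exp (-(α * (n : ℝ) ^ 2) * t)))
              / (α * (n : ℝ) ^ 2 - β)))) x := by
    have hsum : HasDerivAt (fun y : ℝ => ∑ n ∈ Finset.Icc 1 N,
            ((-1 : ℝ) ^ n * (-Real.sin (Real.pi * (n : ℝ) * (L - ℓ + y) / L) * (Real.pi * (n : ℝ) * 1 / L))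
              * (Real.exp (-β * t) - Real.exp (-(α * (n : ℝ) ^ 2) * t)))
              / (α * (n : ℝ) ^ 2 - β))
        (∑ n ∈ Finset.Icc 1 N,
            ((-1 : ℝ) ^ n * (-(Real.cos (Real.pi * (n : ℝ) * (L - ℓ + x) / L) * (Real.pi * (n : ℝ) * 1 / L))
                * (Real.pi * (n : ℝ) * 1 / L))
              * (Real.exp (-β * t) - Real.exp (-(α * (n : ℝ) ^ 2) * t)))
              / (α * (n : ℝ) ^ 2 - β)) x :=
      HasDerivAt.fun_sum fun n _ =>
        (((((hu n x).sin.neg.mul_const (Real.pi * (n : ℝ) * 1 / L)).const_mul ((-1 : ℝ) ^ n)).mul_const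
          (Real.exp (-β * t) - Real.exp (-(α * (n : ℝ) ^ 2) * t))).div_const (α * (n : ℝ) ^ 2 - β))
    exact (((hasDerivAt_const x (0 : ℝ)).add (hsum.const_mul 2)).const_mul
      (K * g * P_in / (4 * a * L))).const_sub (-(2 * a * G₀ * 1))
  rw [hfun_t, htime.deriv, hd1, hx2.deriv]
  -- algebra
  have hβe : -(-β * Real.exp (-β * t)) / β = Real.exp (-β * t) := by field_simp
  have hkey : ∑ n ∈ Finset.Icc 1 N,
        ((-1 : ℝ) ^ n * Real.cos (Real.pi * (n : ℝ) * (L - ℓ + x) / L)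
          * (-β * Real.exp (-β * t) - -(α * (n : ℝ) ^ 2) * Real.exp (-(α * (n : ℝ) ^ 2) * t)))
          / (α * (n : ℝ) ^ 2 - β)
      - (c ^ 2 / (2 * a)) * ∑ n ∈ Finset.Icc 1 N,
            ((-1 : ℝ) ^ n * (-(Real.cos (Real.pi * (n : ℝ) * (L - ℓ + x) / L) * (Real.pi * (n : ℝ) * 1 / L))
                * (Real.pi * (n : ℝ) * 1 / L))
              * (Real.exp (-β * t) - Real.exp (-(α * (n : ℝ) ^ 2) * t)))
              / (α * (n : ℝ) ^ 2 - β)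
      = Real.exp (-β * t) * ∑ n ∈ Finset.Icc 1 N, (-1 : ℝ) ^ n
              * Real.cos (Real.pi * (n : ℝ) * (L - ℓ + x) / L) := by
    rw [Finset.mul_sum, ← Finset.sum_sub_distrib, Finset.mul_sum]
    refine Finset.sum_congr rfl fun n hn => ?_
    have hn1 : (0 : ℕ) < n := (Finset.mem_Icc.mp hn).1
    have hd : α * (n : ℝ) ^ 2 - β ≠ 0 := sub_ne_zero.mpr (hαβ n hn1)
    have hk : c ^ 2 / (2 * a) * (Real.pi * (n : ℝ) * 1 / L) ^ 2 = α * (n : ℝ) ^ 2 := by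
      rw [hα]; field_simp
    rw [← mul_div_assoc, div_sub_div_same, div_eq_iff hd]
    linear_combination ((-1 : ℝ) ^ n * Real.cos (Real.pi * (n : ℝ) * (L - ℓ + x) / L)
        * (Real.exp (-β * t) - Real.exp (-(α * (n : ℝ) ^ 2) * t))) * hk
  rw [hβe]
  linear_combination (-(2 * (K * g * P_in / (4 * a * L)))) * hkey
end
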